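/- arXiv:1102.0177 — 4 statements merged into one kernel-verified Lean document; each statement's English description precedes it below -/
import Mathlib

section
/- For every integer k ≥ 0 and every real r with 0 ≤ r ≤ 1, the integral ∫₀^π (sin θ)^k / (1 + r² − 2r cos θ)^{k/2} dθ equals ω_{k+2}/ω_{k+1}, where ω_m denotes the surface area of the unit sphere S^{m−1} in ℝ^m (with the convention ω_1 = 2). -/
open Real MeasureTheory intervalIntegral

/-- Surface area of the unit sphere in ℝ^m: ω_m = 2 π^{m/2} / Γ(m/2). -/
noncomputable def sphereArea (m : ℕ) : ℝ :=
  2 * Real.pi ^ ((m : ℝ) / 2) / Real.Gamma ((m : ℝ) / 2)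

/-!
For `r < 1` parametrise the unit circle by the direction `φ` of the ray from `(r, 0)`: the ray
leaves the disc at polar angle `θ = φ - arcsin (r sin φ)`, and by the law of sines the integrand
`sin θ / |e^{iθ} - r|` equals `sin φ`. After this substitution the Jacobian
`1 - r cos φ / √(1 - r² sin² φ)` differs from `1` by a function that is odd about `π / 2`, so the
integral is `∫₀^π sin^k`; for `r = 1` the integrand is `cos (θ / 2) ^ k`, with the same integral.
Finally `∫₀^π sin^k` and `ω_{k+2} / ω_{k+1}` satisfy the same two-step recursion, because
`ω_{m+2} = 2π ω_m / m`.
-/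

lemma sphereArea_pos {m : ℕ} (hm : m ≠ 0) : 0 < sphereArea m := by
  have := Gamma_pos_of_pos (by positivity : (0 : ℝ) < m / 2)
  unfold sphereArea
  positivity

lemma sphereArea_one : sphereArea 1 = 2 := by
  have : √π ≠ 0 := (sqrt_pos.2 pi_pos).ne'
  rw [sphereArea, Nat.cast_one, ← sqrt_eq_rpow, Gamma_one_half_eq]
  field_simp

lemma sphereArea_two : sphereArea 2 = 2 * π := by
  simp [sphereArea]

lemma sphereArea_add_two {m : ℕ} (hm : m ≠ 0) :
    sphereArea (m + 2) = 2 * π / m * sphereArea m := by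
  have hm2 : (m : ℝ) / 2 ≠ 0 := by positivity
  have hG : Gamma ((m : ℝ) / 2) ≠ 0 := (Gamma_pos_of_pos (by positivity)).ne'
  unfold sphereArea
  rw [show ((m + 2 : ℕ) : ℝ) / 2 = m / 2 + 1 by push_cast; ring, rpow_add_one pi_pos.ne',
    Gamma_add_one hm2]
  field_simp

theorem integral_sin_pow_eq_sphereArea_div (k : ℕ) :
    ∫ θ in (0 : ℝ)..π, sin θ ^ k = sphereArea (k + 2) / sphereArea (k + 1) := by
  induction k using Nat.twoStepInduction with
  | zero => simp [sphereArea_one, sphereArea_two]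
  | one =>
    rw [sphereArea_add_two one_ne_zero, sphereArea_two, sphereArea_one]
    simp only [pow_one, integral_sin, cos_zero, cos_pi]
    field_simp
    norm_num
  | more n ih _ =>
    rw [integral_sin_pow, ih, sphereArea_add_two (m := n + 2) (by omega),
      sphereArea_add_two (m := n + 1) (by omega)]
    have := sphereArea_pos (m := n + 1) (by omega)
    have := sphereArea_pos (m := n + 2) (by omega)
    push_cast
    simp only [sin_zero, sin_pi, zero_pow n.succ_ne_zero, zero_mul, sub_self, zero_div, zero_add]
    field_simp

lemma one_add_sq_sub_two_mul_cos_nonneg (r θ : ℝ) : 0 ≤ 1 + r ^ 2 - 2 * r * cos θ := by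
  nlinarith [sin_sq_add_cos_sq θ, sq_nonneg (r - cos θ), sq_nonneg (sin θ)]

lemma one_add_sq_sub_two_mul_cos_pos {r : ℝ} (hr : r ^ 2 < 1) (θ : ℝ) :
    0 < 1 + r ^ 2 - 2 * r * cos θ := by
  nlinarith [sin_sq_add_cos_sq θ, sq_nonneg (r - cos θ), sq_nonneg (r * cos θ - 1)]

lemma integral_eq_zero_of_reflect_eq_neg {f : ℝ → ℝ} {a b : ℝ}
    (hf : ∀ x, f (a + b - x) = -f x) : ∫ x in a..b, f x = 0 := by
  have h := integral_comp_sub_left f (a + b) (a := a) (b := b)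
  simp only [hf, intervalIntegral.integral_neg, add_sub_cancel_right, add_sub_cancel_left] at h
  linarith

lemma integral_cos_half_pow (k : ℕ) :
    ∫ θ in (0 : ℝ)..π, cos (θ / 2) ^ k = ∫ θ in (0 : ℝ)..π, sin θ ^ k := by
  rw [integral_comp_div (fun x => cos x ^ k) two_ne_zero, zero_div, EulerSine.integral_cos_pow_eq]
  rw [smul_eq_mul, one_div, mul_inv_cancel_left₀ two_ne_zero]

noncomputable def rayExitAngle (r φ : ℝ) : ℝ := φ - arcsin (r * sin φ)

section
variable {r : ℝ}

lemma sin_rayExitAngle_div_sqrt (hr : r ^ 2 < 1) (φ : ℝ) :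
    sin (rayExitAngle r φ) / √(1 + r ^ 2 - 2 * r * cos (rayExitAngle r φ)) = sin φ := by
  set s := sin φ
  set c := cos φ
  have hsc : s ^ 2 + c ^ 2 = 1 := sin_sq_add_cos_sq φ
  have hA2 : 0 < 1 - (r * s) ^ 2 := by nlinarith [sq_nonneg c, sq_nonneg s]
  set A := √(1 - (r * s) ^ 2)
  have hA : A ^ 2 = 1 - (r * s) ^ 2 := sq_sqrt hA2.le
  have hrs : |r * s| ≤ 1 := abs_le_one_iff_mul_self_le_one.2 (by nlinarith)
  have hsin : sin (arcsin (r * s)) = r * s := sin_arcsin (abs_le.1 hrs).1 (abs_le.1 hrs).2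
  have hpos : 0 < A - r * c := by
    have : (r * c) ^ 2 < A ^ 2 := by nlinarith
    nlinarith [abs_lt_of_sq_lt_sq' this (sqrt_nonneg _), sqrt_nonneg (1 - (r * s) ^ 2)]
  have hnum : sin (rayExitAngle r φ) = s * (A - r * c) := by
    rw [rayExitAngle, sin_sub, hsin, cos_arcsin]; ring
  have hden : 1 + r ^ 2 - 2 * r * cos (rayExitAngle r φ) = (A - r * c) ^ 2 := by
    rw [rayExitAngle, cos_sub, hsin, cos_arcsin]
    linear_combination -hA - r ^ 2 * hsc
  rw [hnum, hden, sqrt_sq hpos.le, mul_div_cancel_right₀ _ hpos.ne']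

lemma hasDerivAt_rayExitAngle (hr : r ^ 2 < 1) (φ : ℝ) :
    HasDerivAt (rayExitAngle r) (1 - r * cos φ / √(1 - (r * sin φ) ^ 2)) φ := by
  have hrs : |r * sin φ| < 1 := by
    rw [abs_mul]
    nlinarith [abs_sin_le_one φ, abs_nonneg (sin φ), sq_abs r, abs_nonneg r]
  have harcsin := (hasDerivAt_arcsin (abs_lt.1 hrs).1.ne' (abs_lt.1 hrs).2.ne).comp φ
    ((hasDerivAt_sin φ).const_mul r)
  exact ((hasDerivAt_id φ).sub harcsin).congr_deriv (by ring)

lemma integral_sin_div_sqrt_pow_of_sq_lt_one (hr : r ^ 2 < 1) (k : ℕ) :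
    ∫ θ in (0 : ℝ)..π, (sin θ / √(1 + r ^ 2 - 2 * r * cos θ)) ^ k
      = ∫ θ in (0 : ℝ)..π, sin θ ^ k := by
  set F : ℝ → ℝ := fun θ => (sin θ / √(1 + r ^ 2 - 2 * r * cos θ)) ^ k
  set h' : ℝ → ℝ := fun φ => r * cos φ / √(1 - (r * sin φ) ^ 2)
  have hF : Continuous F := by
    refine (continuous_sin.div (by fun_prop) fun θ => ?_).pow k
    exact (sqrt_pos.2 (one_add_sq_sub_two_mul_cos_pos hr θ)).ne'
  have hh' : Continuous h' := by
    refine (continuous_const.mul continuous_cos).div (by fun_prop) fun φ => ?_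
    exact (sqrt_pos.2 (by nlinarith [sin_sq_le_one φ])).ne'
  have hodd : ∫ φ in (0 : ℝ)..π, sin φ ^ k * h' φ = 0 :=
    integral_eq_zero_of_reflect_eq_neg fun φ => by
      simp only [h', zero_add, sin_pi_sub, cos_pi_sub]
      ring
  calc ∫ θ in (0 : ℝ)..π, F θ
      = ∫ φ in (0 : ℝ)..π, (F ∘ rayExitAngle r) φ * (1 - h' φ) := by
        rw [integral_comp_mul_deriv (fun φ _ => hasDerivAt_rayExitAngle hr φ)
          (continuous_const.sub hh').continuousOn hF]
        simp only [rayExitAngle, sin_zero, sin_pi, mul_zero, arcsin_zero, sub_zero]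
    _ = ∫ φ in (0 : ℝ)..π, (sin φ ^ k - sin φ ^ k * h' φ) := by
        congr 1
        ext φ
        simp only [F, Function.comp, sin_rayExitAngle_div_sqrt hr]
        ring
    _ = ∫ φ in (0 : ℝ)..π, sin φ ^ k := by
        rw [integral_sub ((continuous_sin.fun_pow k).intervalIntegrable _ _)
          (((continuous_sin.fun_pow k).fun_mul hh').intervalIntegrable _ _), hodd, sub_zero]

end

lemma integral_sin_div_sqrt_two_sub_pow (k : ℕ) :
    ∫ θ in (0 : ℝ)..π, (sin θ / √(1 + 1 ^ 2 - 2 * 1 * cos θ)) ^ k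
      = ∫ θ in (0 : ℝ)..π, sin θ ^ k := by
  rw [← integral_cos_half_pow]
  refine integral_congr_ae (ae_of_all _ fun θ hθ => ?_)
  rw [Set.uIoc_of_le pi_pos.le] at hθ
  have hs : 0 < sin (θ / 2) :=
    sin_pos_of_pos_of_lt_pi (by linarith [hθ.1]) (by linarith [hθ.2, pi_pos])
  have hsin : sin θ = 2 * sin (θ / 2) * cos (θ / 2) := by
    rw [← sin_two_mul, mul_div_cancel₀ _ two_ne_zero]
  have hden : 1 + 1 ^ 2 - 2 * 1 * cos θ = (2 * sin (θ / 2)) ^ 2 := by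
    rw [mul_pow, sin_sq_eq_half_sub, mul_div_cancel₀ _ two_ne_zero]
    ring
  rw [hsin, hden, sqrt_sq (by positivity), mul_div_cancel_left₀ _ (by positivity)]

theorem stmt0 (k : ℕ) (r : ℝ) (hr0 : 0 ≤ r) (hr1 : r ≤ 1) :
    ∫ θ in (0:ℝ)..Real.pi,
        (Real.sin θ) ^ k / (1 + r ^ 2 - 2 * r * Real.cos θ) ^ ((k : ℝ) / 2)
      = sphereArea (k + 2) / sphereArea (k + 1) := by
  have hsqrt (θ : ℝ) : sin θ ^ k / (1 + r ^ 2 - 2 * r * cos θ) ^ ((k : ℝ) / 2)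
      = (sin θ / √(1 + r ^ 2 - 2 * r * cos θ)) ^ k := by
    rw [rpow_div_two_eq_sqrt _ (one_add_sq_sub_two_mul_cos_nonneg r θ), rpow_natCast, div_pow]
  simp only [hsqrt, ← integral_sin_pow_eq_sphereArea_div]
  rcases hr1.eq_or_lt with rfl | hr1
  · exact integral_sin_div_sqrt_two_sub_pow k
  · exact integral_sin_div_sqrt_pow_of_sq_lt_one (by nlinarith) k
end

section
/- Let d ≥ 3 be an integer and α ∈ (2−d, 2) with α ≠ 4 − d; set A(r,θ) = √(1 + r² − 2r cos θ). Then for every r ∈ (0,1) ∪ (1,∞), r φ'(r) − φ(r) = (r(2−α) ω_{d−1} / ((d−1) ω_d)) ∫₀^π [ d (sin θ)^d / A^{4−α} − (d−1)(sin θ)^{d−2} / A^{2−α} ] dθ, where φ(r) = (ω_{d−1}/ω_d) ∫₀^π (r − cos θ)(sin θ)^{d−2} A^{α−2} dθ. -/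
open Real MeasureTheory

/-!
With `u = A² = 1 + r² - 2 r cos θ`, `n = d - 2` and `p = (α - 2) / 2`, differentiating under the
integral sign gives `r φ' - φ` as the integral of
`sin^n θ (cos θ u^p + 2 p r (r - cos θ)² u^(p-1))`, up to the factor `ω_{d-1}/ω_d`.
Writing `(r - cos θ)² = u - sin² θ` turns this into
`sin^n cos θ u^p + 2 p r sin^n u^p - 2 p r sin^(n+2) u^(p-1)`, and integrating by parts against
`(sin^(n+1))' = (n + 1) sin^n cos` replaces the cosine term by a multiple of `sin^(n+2) u^(p-1)`.
Differentiation under the integral sign is legitimate because for `r ≠ 1` the `r`-derivative of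
the integrand is jointly continuous near `{r} × [0, π]` (where `u` stays away from `0`), hence
bounded there by compactness.
-/

open Set Metric Function Topology

theorem hasDerivAt_intervalIntegral_of_continuousOn_deriv
    {E : Type*} [NormedAddCommGroup E] [NormedSpace ℝ E]
    {F F' : ℝ → ℝ → E} {x₀ ε a b : ℝ} (hε : 0 < ε)
    (hF : ∀ x ∈ ball x₀ ε, ContinuousOn (F x) (uIcc a b))
    (hF' : ContinuousOn (uncurry F') (closedBall x₀ ε ×ˢ uIcc a b))
    (hderiv : ∀ x ∈ ball x₀ ε, ∀ t ∈ uIcc a b, HasDerivAt (F · t) (F' x t) x) :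
    HasDerivAt (fun x => ∫ t in a..b, F x t) (∫ t in a..b, F' x₀ t) x₀ := by
  obtain ⟨C, hC⟩ :=
    ((isCompact_closedBall x₀ ε).prod isCompact_uIcc).exists_bound_of_continuousOn hF'
  have hx₀ : x₀ ∈ ball x₀ ε := mem_ball_self hε
  have hF'x₀ : ContinuousOn (F' x₀) (uIcc a b) :=
    hF'.comp (Continuous.continuousOn (f := fun t => (x₀, t)) (by fun_prop))
      fun t ht => ⟨ball_subset_closedBall hx₀, ht⟩
  refine (intervalIntegral.hasDerivAt_integral_of_dominated_loc_of_deriv_le (bound := fun _ => C)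
    (ball_mem_nhds x₀ hε) ?_ (hF x₀ hx₀).intervalIntegrable
    ((hF'x₀.mono uIoc_subset_uIcc).aestronglyMeasurable measurableSet_uIoc) ?_
    intervalIntegrable_const ?_).2
  · filter_upwards [ball_mem_nhds x₀ hε] with x hx
    exact ((hF x hx).mono uIoc_subset_uIcc).aestronglyMeasurable measurableSet_uIoc
  · exact ae_of_all _ fun t ht x hx =>
      hC (x, t) ⟨ball_subset_closedBall hx, uIoc_subset_uIcc ht⟩
  · exact ae_of_all _ fun t ht x hx => hderiv x hx t (uIoc_subset_uIcc ht)

/-- `distSq r θ = A(r, θ)²`, the squared distance from `r e₁` to a unit vector at angle `θ`. -/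
noncomputable def distSq (r θ : ℝ) : ℝ := 1 + r ^ 2 - 2 * r * cos θ

lemma sq_abs_sub_one_le_distSq (r θ : ℝ) : (|r| - 1) ^ 2 ≤ distSq r θ := by
  have h : r * cos θ ≤ |r| :=
    calc r * cos θ ≤ |r * cos θ| := le_abs_self _
      _ = |r| * |cos θ| := abs_mul _ _
      _ ≤ |r| := mul_le_of_le_one_right (abs_nonneg r) (abs_cos_le_one θ)
  rw [distSq]
  nlinarith [sq_abs r]

lemma distSq_nonneg (r θ : ℝ) : 0 ≤ distSq r θ :=
  (sq_nonneg _).trans (sq_abs_sub_one_le_distSq r θ)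

lemma distSq_pos {r : ℝ} (hr : |r| ≠ 1) (θ : ℝ) : 0 < distSq r θ :=
  (sq_pos_of_ne_zero (sub_ne_zero.2 hr)).trans_le (sq_abs_sub_one_le_distSq r θ)

lemma distSq_eq_sub_cos_sq_add_sin_sq (r θ : ℝ) :
    distSq r θ = (r - cos θ) ^ 2 + sin θ ^ 2 := by
  rw [distSq]
  nlinarith [sin_sq_add_cos_sq θ]

lemma sqrt_distSq_rpow (r θ q : ℝ) :
    √(1 + r ^ 2 - 2 * r * cos θ) ^ q = distSq r θ ^ (q / 2) :=
  (rpow_div_two_eq_sqrt q (distSq_nonneg r θ)).symm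

lemma continuousOn_distSq_rpow (p : ℝ) :
    ContinuousOn (fun q : ℝ × ℝ => distSq q.1 q.2 ^ p) {q | |q.1| ≠ 1} :=
  ContinuousOn.rpow_const (by unfold distSq; fun_prop) fun q hq => Or.inl (distSq_pos hq q.2).ne'

lemma continuous_distSq_rpow_right (p : ℝ) {r : ℝ} (hr : |r| ≠ 1) :
    Continuous (distSq r · ^ p) :=
  Continuous.rpow_const (by unfold distSq; fun_prop) fun θ => Or.inl (distSq_pos hr θ).ne'

lemma hasDerivAt_distSq_rpow_left (p θ : ℝ) {r : ℝ} (hr : |r| ≠ 1) :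
    HasDerivAt (distSq · θ ^ p) (2 * (r - cos θ) * p * distSq r θ ^ (p - 1)) r := by
  have h : HasDerivAt (distSq · θ) (2 * (r - cos θ)) r := by
    refine ((((hasDerivAt_id' r).pow 2).const_add 1).sub
      (((hasDerivAt_id' r).const_mul 2).mul_const (cos θ))).congr_deriv ?_
    push_cast
    ring
  exact h.rpow_const (Or.inl (distSq_pos hr θ).ne')

lemma hasDerivAt_distSq_rpow_right (p r θ : ℝ) (hr : |r| ≠ 1) :
    HasDerivAt (distSq r · ^ p) (2 * r * sin θ * p * distSq r θ ^ (p - 1)) θ := by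
  have h : HasDerivAt (distSq r ·) (2 * r * sin θ) θ :=
    (((hasDerivAt_cos θ).const_mul (2 * r)).const_sub (1 + r ^ 2)).congr_deriv (by ring)
  exact h.rpow_const (Or.inl (distSq_pos hr θ).ne')

lemma integral_sin_pow_mul_cos_mul_distSq_rpow (n : ℕ) (p : ℝ) {r : ℝ} (hr : |r| ≠ 1) :
    (n + 1) * ∫ θ in (0)..π, sin θ ^ n * cos θ * distSq r θ ^ p =
      -(2 * r * p) * ∫ θ in (0)..π, sin θ ^ (n + 2) * distSq r θ ^ (p - 1) := by
  have hderiv : ∀ θ, HasDerivAt (fun θ => sin θ ^ (n + 1) * distSq r θ ^ p)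
      ((n + 1) * (sin θ ^ n * cos θ * distSq r θ ^ p)
        + 2 * r * p * (sin θ ^ (n + 2) * distSq r θ ^ (p - 1))) θ := fun θ => by
    refine (((hasDerivAt_sin θ).pow (n + 1)).mul
      (hasDerivAt_distSq_rpow_right p r θ hr)).congr_deriv ?_
    simp only [Pi.pow_apply]
    push_cast
    ring
  have hcont := continuous_distSq_rpow_right p hr
  have hcont' := continuous_distSq_rpow_right (p - 1) hr
  have hFTC := intervalIntegral.integral_eq_sub_of_hasDerivAt (fun θ _ => hderiv θ)
    (Continuous.intervalIntegrable (by fun_prop) 0 π)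
  rw [intervalIntegral.integral_add (Continuous.intervalIntegrable (by fun_prop) 0 π)
    (Continuous.intervalIntegrable (by fun_prop) 0 π), intervalIntegral.integral_const_mul,
    intervalIntegral.integral_const_mul] at hFTC
  simp only [sin_pi, sin_zero, zero_pow n.succ_ne_zero, zero_mul, sub_self] at hFTC
  linear_combination hFTC

/-- `φ = (ω_{d-1} / ω_d) • radialIntegral (d - 2) ((α - 2) / 2)`. -/
noncomputable def radialIntegral (n : ℕ) (p x : ℝ) : ℝ :=
  ∫ θ in (0)..π, (x - cos θ) * sin θ ^ n * distSq x θ ^ p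

lemma hasDerivAt_sub_cos_mul_distSq_rpow (n : ℕ) (p θ : ℝ) {r : ℝ} (hr : |r| ≠ 1) :
    HasDerivAt (fun x => (x - cos θ) * sin θ ^ n * distSq x θ ^ p)
      (sin θ ^ n * (distSq r θ ^ p + 2 * p * (r - cos θ) ^ 2 * distSq r θ ^ (p - 1))) r :=
  ((((hasDerivAt_id' r).sub_const (cos θ)).mul_const (sin θ ^ n)).mul
    (hasDerivAt_distSq_rpow_left p θ hr)).congr_deriv (by ring)

lemma hasDerivAt_radialIntegral (n : ℕ) (p : ℝ) {r : ℝ} (hr : |r| ≠ 1) :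
    HasDerivAt (radialIntegral n p)
      (∫ θ in (0)..π,
        sin θ ^ n * (distSq r θ ^ p + 2 * p * (r - cos θ) ^ 2 * distSq r θ ^ (p - 1))) r := by
  have hU : {x : ℝ | |x| ≠ 1} ∈ 𝓝 r :=
    (isOpen_ne_fun continuous_abs continuous_const).mem_nhds hr
  obtain ⟨ε, hε, hεU⟩ := nhds_basis_closedBall.mem_iff.1 hU
  refine hasDerivAt_intervalIntegral_of_continuousOn_deriv hε (fun x hx => ?_) ?_
    fun x hx θ _ => hasDerivAt_sub_cos_mul_distSq_rpow n p θ (hεU (ball_subset_closedBall hx))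
  · have := continuous_distSq_rpow_right p (hεU (ball_subset_closedBall hx))
    exact Continuous.continuousOn (by fun_prop)
  · have := continuousOn_distSq_rpow p
    have := continuousOn_distSq_rpow (p - 1)
    refine ContinuousOn.mono (s := {q | |q.1| ≠ 1}) ?_ fun q hq => hεU hq.1
    fun_prop

lemma mul_integral_deriv_sub_radialIntegral (n : ℕ) (p : ℝ) {r : ℝ} (hr : |r| ≠ 1) :
    r * (∫ θ in (0)..π,
        sin θ ^ n * (distSq r θ ^ p + 2 * p * (r - cos θ) ^ 2 * distSq r θ ^ (p - 1)))
      - radialIntegral n p r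
      = -(2 * r * p) / (n + 1) * ∫ θ in (0)..π,
          ((n + 2) * (sin θ ^ (n + 2) * distSq r θ ^ (p - 1))
            - (n + 1) * (sin θ ^ n * distSq r θ ^ p)) := by
  have hcont := continuous_distSq_rpow_right p hr
  have hcont' := continuous_distSq_rpow_right (p - 1) hr
  have hint {f : ℝ → ℝ} (hf : Continuous f) : IntervalIntegrable f volume 0 π :=
    hf.intervalIntegrable 0 π
  have hpointwise : ∀ θ,
      r * (sin θ ^ n * (distSq r θ ^ p + 2 * p * (r - cos θ) ^ 2 * distSq r θ ^ (p - 1)))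
        - (r - cos θ) * sin θ ^ n * distSq r θ ^ p
      = sin θ ^ n * cos θ * distSq r θ ^ p + 2 * r * p * (sin θ ^ n * distSq r θ ^ p)
        - 2 * r * p * (sin θ ^ (n + 2) * distSq r θ ^ (p - 1)) := fun θ => by
    have hsplit : distSq r θ ^ p = distSq r θ ^ (p - 1) * distSq r θ := by
      rw [← rpow_add_one (distSq_pos hr θ).ne', sub_add_cancel]
    rw [hsplit, distSq_eq_sub_cos_sq_add_sin_sq r θ]
    ring
  rw [radialIntegral, ← intervalIntegral.integral_const_mul, ← intervalIntegral.integral_sub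
      (hint (by fun_prop)) (hint (by fun_prop)),
    intervalIntegral.integral_congr fun θ _ => hpointwise θ,
    intervalIntegral.integral_sub (hint (by fun_prop)) (hint (by fun_prop)),
    intervalIntegral.integral_add (hint (by fun_prop)) (hint (by fun_prop)),
    intervalIntegral.integral_sub (hint (by fun_prop)) (hint (by fun_prop))]
  simp only [intervalIntegral.integral_const_mul]
  field_simp
  linear_combination integral_sin_pow_mul_cos_mul_distSq_rpow n p hr

theorem stmt6_general (d : ℕ) (hd : 3 ≤ d) (α : ℝ)
    (φ : ℝ → ℝ)
    (hφ : ∀ r : ℝ, φ r = sphereArea (d - 1) / sphereArea d *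
      ∫ θ in (0:ℝ)..Real.pi,
        (r - Real.cos θ) * (Real.sin θ) ^ (d - 2) *
          (Real.sqrt (1 + r ^ 2 - 2 * r * Real.cos θ)) ^ (α - 2)) :
    ∀ r ∈ Set.Ioo (0:ℝ) 1 ∪ Set.Ioi 1, ∀ D : ℝ, HasDerivAt φ D r →
      r * D - φ r = r * (2 - α) * sphereArea (d - 1) / (((d : ℝ) - 1) * sphereArea d) *
        ∫ θ in (0:ℝ)..Real.pi,
          ((d : ℝ) * (Real.sin θ) ^ d /
              (Real.sqrt (1 + r ^ 2 - 2 * r * Real.cos θ)) ^ (4 - α)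
            - ((d : ℝ) - 1) * (Real.sin θ) ^ (d - 2) /
              (Real.sqrt (1 + r ^ 2 - 2 * r * Real.cos θ)) ^ (2 - α)) := by
  intro r hr D hD
  obtain ⟨n, rfl⟩ : ∃ n, d = n + 2 := ⟨d - 2, by omega⟩
  have hr₁ : |r| ≠ 1 := by
    rcases hr with h | h
    · rw [abs_of_pos h.1]; exact h.2.ne
    · rw [abs_of_pos (one_pos.trans h)]; exact h.ne'
  set c := sphereArea (n + 2 - 1) / sphereArea (n + 2)
  set p := (α - 2) / 2
  have hφ' : φ = fun x => c * radialIntegral n p x :=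
    funext fun x => by simp only [hφ, Nat.add_sub_cancel, sqrt_distSq_rpow, radialIntegral, p]
  have hRHS : ∫ θ in (0)..π, (((n + 2 : ℕ) : ℝ) * sin θ ^ (n + 2)
          / √(1 + r ^ 2 - 2 * r * cos θ) ^ (4 - α)
        - ((n : ℝ) + 1) * sin θ ^ (n + 2 - 2) / √(1 + r ^ 2 - 2 * r * cos θ) ^ (2 - α))
      = ∫ θ in (0)..π, ((n + 2) * (sin θ ^ (n + 2) * distSq r θ ^ (p - 1))
          - (n + 1) * (sin θ ^ n * distSq r θ ^ p)) := by
    refine intervalIntegral.integral_congr fun θ _ => ?_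
    have hu := distSq_nonneg r θ
    rw [sqrt_distSq_rpow, sqrt_distSq_rpow, show p - 1 = -((4 - α) / 2) by ring,
      show p = -((2 - α) / 2) by ring, rpow_neg hu, rpow_neg hu, Nat.add_sub_cancel]
    push_cast
    ring
  rw [show ((n + 2 : ℕ) : ℝ) - 1 = n + 1 by push_cast; ring,
    hD.unique (hφ' ▸ (hasDerivAt_radialIntegral n p hr₁).const_mul c), hφ', hRHS, ← div_div]
  linear_combination c * mul_integral_deriv_sub_radialIntegral n p hr₁

theorem stmt6 (d : ℕ) (hd : 3 ≤ d) (α : ℝ) (hα1 : 2 - (d : ℝ) < α) (hα2 : α < 2)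
    (hα3 : α ≠ 4 - (d : ℝ))
    (φ : ℝ → ℝ)
    (hφ : ∀ r : ℝ, φ r = sphereArea (d - 1) / sphereArea d *
      ∫ θ in (0:ℝ)..Real.pi,
        (r - Real.cos θ) * (Real.sin θ) ^ (d - 2) *
          (Real.sqrt (1 + r ^ 2 - 2 * r * Real.cos θ)) ^ (α - 2)) :
    ∀ r ∈ Set.Ioo (0:ℝ) 1 ∪ Set.Ioi 1, ∀ D : ℝ, HasDerivAt φ D r →
      r * D - φ r = r * (2 - α) * sphereArea (d - 1) / (((d : ℝ) - 1) * sphereArea d) *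
        ∫ θ in (0:ℝ)..Real.pi,
          ((d : ℝ) * (Real.sin θ) ^ d /
              (Real.sqrt (1 + r ^ 2 - 2 * r * Real.cos θ)) ^ (4 - α)
            - ((d : ℝ) - 1) * (Real.sin θ) ^ (d - 2) /
              (Real.sqrt (1 + r ^ 2 - 2 * r * Real.cos θ)) ^ (2 - α)) :=
  stmt6_general d hd α φ hφ
end

section
/- Let d ≥ 4 and α ∈ [5−d, 2). Then for all r > 0 and θ ∈ (0, π) with cos θ ≠ r, setting A = √(1 + r² − 2r cos θ) and s = sin θ, one has 1 − 2(4−α)s²/((d−1)A²) + (4−α)(6−α)s⁴/((d−1)(d+1)A⁴) > 0, and the expression is ≥ 0 for all θ ∈ [0, π]. -/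
open Real
set_option maxHeartbeats 1000000 in

theorem stmt8 (d : ℕ) (hd : 4 ≤ d) (α : ℝ) (hα1 : 5 - (d : ℝ) ≤ α) (hα2 : α < 2) :
    (∀ r θ : ℝ, 0 < r → θ ∈ Set.Ioo 0 Real.pi → Real.cos θ ≠ r →
      0 < 1 - 2 * (4 - α) * (Real.sin θ) ^ 2 /
            (((d : ℝ) - 1) * (Real.sqrt (1 + r ^ 2 - 2 * r * Real.cos θ)) ^ 2)
          + (4 - α) * (6 - α) * (Real.sin θ) ^ 4 /
            (((d : ℝ) - 1) * ((d : ℝ) + 1) *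
              (Real.sqrt (1 + r ^ 2 - 2 * r * Real.cos θ)) ^ 4)) ∧
    (∀ r θ : ℝ, 0 < r → θ ∈ Set.Icc 0 Real.pi →
      0 ≤ 1 - 2 * (4 - α) * (Real.sin θ) ^ 2 /
            (((d : ℝ) - 1) * (Real.sqrt (1 + r ^ 2 - 2 * r * Real.cos θ)) ^ 2)
          + (4 - α) * (6 - α) * (Real.sin θ) ^ 4 /
            (((d : ℝ) - 1) * ((d : ℝ) + 1) *
              (Real.sqrt (1 + r ^ 2 - 2 * r * Real.cos θ)) ^ 4)) := by
  have hd' : (4 : ℝ) ≤ (d : ℝ) := by exact_mod_cast hd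
  have hD1 : (0:ℝ) < (d:ℝ) - 1 := by linarith
  have hD2 : (0:ℝ) < (d:ℝ) + 1 := by linarith
  have hc : (0:ℝ) < 4 - α := by linarith
  have h6 : (0:ℝ) < 6 - α := by linarith
  have hkey : (4 - α) * ((d:ℝ) + 1) ≤ ((d:ℝ) - 1) * (6 - α) := by nlinarith
  have h6le : 6 - α ≤ (d:ℝ) + 1 := by linarith
  constructor
  · intro r θ hr hθ hne
    set A2 : ℝ := 1 + r ^ 2 - 2 * r * Real.cos θ with hA2def
    clear_value A2
    have hA2eq : A2 = (Real.cos θ - r) ^ 2 + Real.sin θ ^ 2 := by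
      rw [hA2def]; linear_combination -(Real.sin_sq_add_cos_sq θ)
    have hne' : Real.cos θ - r ≠ 0 := sub_ne_zero.mpr hne
    have hcr : 0 < (Real.cos θ - r) ^ 2 := by positivity
    have hslt : Real.sin θ ^ 2 < A2 := by rw [hA2eq]; nlinarith [sq_nonneg (Real.sin θ)]
    have hA2pos : 0 < A2 := lt_of_le_of_lt (sq_nonneg _) hslt
    have hs2 : Real.sqrt A2 ^ 2 = A2 := Real.sq_sqrt hA2pos.le
    have hs4 : Real.sqrt A2 ^ 4 = A2 ^ 2 := by
      rw [show (4:ℕ) = 2*2 from rfl, pow_mul, hs2]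
    rw [hs2, hs4]
    have hsqpos : 0 < ((d:ℝ) + 1) * A2 - (6 - α) * Real.sin θ ^ 2 := by nlinarith
    have key : 1 - 2 * (4 - α) * Real.sin θ ^ 2 / (((d:ℝ) - 1) * A2)
        + (4 - α) * (6 - α) * Real.sin θ ^ 4 / (((d:ℝ) - 1) * ((d:ℝ) + 1) * A2 ^ 2)
        = (((d:ℝ) - 1) * ((d:ℝ) + 1) * A2 ^ 2
            - 2 * (4 - α) * Real.sin θ ^ 2 * (((d:ℝ) + 1) * A2)
            + (4 - α) * (6 - α) * Real.sin θ ^ 4) / (((d:ℝ) - 1) * ((d:ℝ) + 1) * A2 ^ 2) := by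
      field_simp
    rw [key]
    apply div_pos _ (by positivity)
    nlinarith [mul_nonneg (sub_nonneg.mpr hkey) (mul_pos hD2 (pow_pos hA2pos 2)).le,
      mul_pos hc (pow_pos hsqpos 2), sq_nonneg (((d:ℝ)+1)*A2 - (6-α)*Real.sin θ ^ 2)]
  · intro r θ hr hθ
    set A2 : ℝ := 1 + r ^ 2 - 2 * r * Real.cos θ with hA2def
    clear_value A2
    have hA2eq : A2 = (Real.cos θ - r) ^ 2 + Real.sin θ ^ 2 := by
      rw [hA2def]; linear_combination -(Real.sin_sq_add_cos_sq θ)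
    have hA2nn : 0 ≤ A2 := by rw [hA2eq]; positivity
    rcases eq_or_lt_of_le hA2nn with h0 | hA2pos
    · rw [← h0, Real.sqrt_zero]
      norm_num
    · have hsle : Real.sin θ ^ 2 ≤ A2 := by rw [hA2eq]; nlinarith [sq_nonneg (Real.cos θ - r)]
      have hs2 : Real.sqrt A2 ^ 2 = A2 := Real.sq_sqrt hA2pos.le
      have hs4 : Real.sqrt A2 ^ 4 = A2 ^ 2 := by
        rw [show (4:ℕ) = 2*2 from rfl, pow_mul, hs2]
      rw [hs2, hs4]
      have hsqnn : 0 ≤ ((d:ℝ) + 1) * A2 - (6 - α) * Real.sin θ ^ 2 := by nlinarith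
      have key : 1 - 2 * (4 - α) * Real.sin θ ^ 2 / (((d:ℝ) - 1) * A2)
          + (4 - α) * (6 - α) * Real.sin θ ^ 4 / (((d:ℝ) - 1) * ((d:ℝ) + 1) * A2 ^ 2)
          = (((d:ℝ) - 1) * ((d:ℝ) + 1) * A2 ^ 2
              - 2 * (4 - α) * Real.sin θ ^ 2 * (((d:ℝ) + 1) * A2)
              + (4 - α) * (6 - α) * Real.sin θ ^ 4) / (((d:ℝ) - 1) * ((d:ℝ) + 1) * A2 ^ 2) := by
        field_simp
      rw [key]
      apply div_nonneg _ (by positivity)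
      have hNum : 0 ≤ (6 - α) * (((d:ℝ) - 1) * ((d:ℝ) + 1) * A2 ^ 2
          - 2 * (4 - α) * Real.sin θ ^ 2 * (((d:ℝ) + 1) * A2)
          + (4 - α) * (6 - α) * Real.sin θ ^ 4) := by
        nlinarith [mul_nonneg (sub_nonneg.mpr hkey) (mul_pos hD2 (pow_pos hA2pos 2)).le,
          mul_nonneg hc.le (sq_nonneg (((d:ℝ)+1)*A2 - (6-α)*Real.sin θ ^ 2))]
      exact nonneg_of_mul_nonneg_right hNum h6
end

section
/- Let d ≥ 3 be an integer and γ = 4 − d − α ∈ (−1, 0) (i.e., d + α ∈ (4,5)). Define ψ(1) = ∫₀^π [ d (sin θ)^d / (2 sin(θ/2))^{d+γ} − (d−1)(sin θ)^{d−2} / (2 sin(θ/2))^{d−2+γ} ] dθ. Then ψ(1) = 2^{−γ} · (γ(d−1)/(d−γ)) · B((d−1)/2, (1−γ)/2) < 0, where B is the Beta function. -/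
/-!
Substituting `θ = 2u` and `sin θ = 2 sin u cos u`, each term of the integrand becomes
`2^(-γ) sin^(-γ) u cos^n u`, whose integral over `[0, π/2]` is a Beta value (substitute
`x = sin² u`). The two Beta values differ by one in the second argument, and the recurrence
`B(p, q + 1) = q / (p + q) · B(p, q)` combines them into the closed form.
-/

open Real MeasureTheory

/-- The real Beta function B(x,y) = Γ(x)Γ(y)/Γ(x+y). -/
noncomputable def betaFn (x y : ℝ) : ℝ :=
  Real.Gamma x * Real.Gamma y / Real.Gamma (x + y)

open Set

lemma betaFn_eq_beta : betaFn = ProbabilityTheory.beta := rfl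

lemma betaFn_pos {p q : ℝ} (hp : 0 < p) (hq : 0 < q) : 0 < betaFn p q :=
  ProbabilityTheory.beta_pos hp hq

lemma betaFn_comm (p q : ℝ) : betaFn p q = betaFn q p := by
  simp only [betaFn, mul_comm, add_comm]

lemma betaFn_add_one_right {p q : ℝ} (hq : q ≠ 0) (hpq : p + q ≠ 0) :
    betaFn p (q + 1) = q / (p + q) * betaFn p q := by
  rw [betaFn, betaFn, Real.Gamma_add_one hq, ← add_assoc, Real.Gamma_add_one hpq,
    div_mul_div_comm, mul_left_comm]

lemma betaFn_eq_setIntegral {p q : ℝ} (hp : 0 < p) (hq : 0 < q) :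
    betaFn p q = ∫ x in Ioo (0 : ℝ) 1, x ^ (p - 1) * (1 - x) ^ (q - 1) := by
  rw [betaFn_eq_beta, ProbabilityTheory.beta_eq_betaIntegralReal p q hp hq, Complex.betaIntegral,
    intervalIntegral.integral_of_le zero_le_one, ← integral_Ioc_eq_integral_Ioo,
    ← RCLike.re_to_complex, ← integral_re]
  · refine setIntegral_congr_fun measurableSet_Ioc fun x ⟨hx0, hx1⟩ ↦ ?_
    norm_cast
    rw [← Complex.ofReal_cpow hx0.le, ← Complex.ofReal_cpow (by linarith), RCLike.re_to_complex,
      ← Complex.ofReal_mul, Complex.ofReal_re]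
  · have := Complex.betaIntegral_convergent (u := p) (v := q) (by simpa) (by simpa)
    rwa [intervalIntegrable_iff_integrableOn_Ioc_of_le zero_le_one] at this

lemma strictMonoOn_sin_sq : StrictMonoOn (fun u ↦ sin u ^ 2) (Icc 0 (π / 2)) := by
  intro x hx y hy hxy
  have hx0 : 0 ≤ sin x := sin_nonneg_of_nonneg_of_le_pi hx.1 (by linarith [hx.2, pi_pos])
  have := strictMonoOn_sin ⟨by linarith [hx.1, pi_pos], hx.2⟩
    ⟨by linarith [hy.1, pi_pos], hy.2⟩ hxy
  simp only
  gcongr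

lemma sin_sq_image_Ioo : (fun u ↦ sin u ^ 2) '' Ioo 0 (π / 2) = Ioo 0 1 := by
  rw [ContinuousOn.image_Ioo_of_strictMonoOn (by positivity) (by fun_prop) strictMonoOn_sin_sq]
  simp

lemma setIntegral_sin_rpow_mul_cos_rpow {a b : ℝ} (ha : -1 < a) (hb : -1 < b) :
    ∫ u in Ioo 0 (π / 2), sin u ^ a * cos u ^ b = betaFn ((a + 1) / 2) ((b + 1) / 2) / 2 := by
  have hderiv : ∀ u ∈ Ioo 0 (π / 2),
      HasDerivWithinAt (fun u ↦ sin u ^ 2) (2 * sin u * cos u) (Ioo 0 (π / 2)) u := fun u _ ↦ by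
    simpa [mul_assoc] using ((hasDerivAt_sin u).fun_pow 2).hasDerivWithinAt
  rw [betaFn_eq_setIntegral (by linarith) (by linarith), ← sin_sq_image_Ioo,
    integral_image_eq_integral_abs_deriv_smul measurableSet_Ioo hderiv
      (strictMonoOn_sin_sq.mono Ioo_subset_Icc_self).injOn,
    eq_div_iff two_ne_zero, ← integral_mul_const]
  refine setIntegral_congr_fun measurableSet_Ioo fun u hu ↦ ?_
  have hs : 0 < sin u := sin_pos_of_pos_of_lt_pi hu.1 (by linarith [hu.2, pi_pos])
  have hc : 0 < cos u := cos_pos_of_mem_Ioo ⟨by linarith [hu.1, pi_pos], hu.2⟩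
  rw [smul_eq_mul, abs_of_pos (by positivity), ← cos_sq', ← rpow_natCast, ← rpow_natCast,
    ← rpow_mul hs.le, ← rpow_mul hc.le]
  push_cast
  rw [show 2 * ((a + 1) / 2 - 1) = a - 1 by ring, show 2 * ((b + 1) / 2 - 1) = b - 1 by ring,
    rpow_sub_one hs.ne', rpow_sub_one hc.ne']
  field_simp

lemma integral_sin_rpow_mul_cos_pow {a : ℝ} (ha : -1 < a) (n : ℕ) :
    ∫ u in (0)..(π / 2), sin u ^ a * cos u ^ n = betaFn ((a + 1) / 2) ((n + 1) / 2) / 2 := by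
  rw [intervalIntegral.integral_of_le (by positivity), integral_Ioc_eq_integral_Ioo]
  simpa only [rpow_natCast] using
    setIntegral_sin_rpow_mul_cos_rpow ha (b := n) (by linarith [n.cast_nonneg (α := ℝ)])

lemma eqOn_sin_pow_div_rpow_two_mul_sin_half (n : ℕ) (r : ℝ) :
    EqOn (fun θ ↦ sin θ ^ n / (2 * sin (θ / 2)) ^ ((n : ℝ) + r))
      (fun θ ↦ 2 ^ (-r) * (sin (θ / 2) ^ (-r) * cos (θ / 2) ^ n)) (Ioo 0 π) := by
  intro θ hθ
  have hs : 0 < sin (θ / 2) :=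
    sin_pos_of_pos_of_lt_pi (by linarith [hθ.1]) (by linarith [hθ.2, pi_pos])
  have hsin : sin θ = 2 * sin (θ / 2) * cos (θ / 2) := by
    rw [← sin_two_mul, mul_div_cancel₀ θ two_ne_zero]
  simp only
  rw [hsin, mul_pow, ← rpow_natCast (2 * sin (θ / 2)), rpow_add (by positivity),
    rpow_neg zero_le_two, rpow_neg hs.le]
  field_simp
  rw [mul_rpow zero_le_two hs.le, mul_assoc]

lemma intervalIntegrable_sin_pow_div_rpow {r : ℝ} (hr : r ≤ 0) (n : ℕ) :
    IntervalIntegrable (fun θ ↦ sin θ ^ n / (2 * sin (θ / 2)) ^ ((n : ℝ) + r)) volume 0 π := by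
  have hcont : Continuous fun θ ↦ 2 ^ (-r) * (sin (θ / 2) ^ (-r) * cos (θ / 2) ^ n) :=
    continuous_const.mul (((continuous_sin.comp (continuous_id.div_const 2)).rpow_const
      fun _ ↦ Or.inr (by linarith)).mul ((continuous_cos.comp (continuous_id.div_const 2)).pow n))
  refine (hcont.intervalIntegrable 0 π).congr_uIoo ?_
  rw [uIoo_of_le pi_pos.le]
  exact (eqOn_sin_pow_div_rpow_two_mul_sin_half n r).symm

lemma integral_sin_pow_div_rpow {r : ℝ} (hr : r < 1) (n : ℕ) :
    ∫ θ in (0)..π, sin θ ^ n / (2 * sin (θ / 2)) ^ ((n : ℝ) + r)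
      = 2 ^ (-r) * betaFn ((1 - r) / 2) ((n + 1) / 2) := by
  rw [intervalIntegral.integral_congr_Ioo_of_le pi_pos.le
      (eqOn_sin_pow_div_rpow_two_mul_sin_half n r),
    intervalIntegral.integral_comp_div (fun u ↦ 2 ^ (-r) * (sin u ^ (-r) * cos u ^ n))
      two_ne_zero, zero_div, intervalIntegral.integral_const_mul,
    integral_sin_rpow_mul_cos_pow (by linarith), smul_eq_mul, neg_add_eq_sub]
  ring

theorem stmt9_general (d : ℕ) (hd : 3 ≤ d) (γ : ℝ) (hγ2 : γ < 0) :
    (∫ θ in (0:ℝ)..Real.pi,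
        ((d : ℝ) * (Real.sin θ) ^ d / (2 * Real.sin (θ / 2)) ^ ((d : ℝ) + γ)
          - ((d : ℝ) - 1) * (Real.sin θ) ^ (d - 2) /
              (2 * Real.sin (θ / 2)) ^ ((d : ℝ) - 2 + γ)))
      = (2:ℝ) ^ (-γ) * (γ * ((d : ℝ) - 1) / ((d : ℝ) - γ)) *
          betaFn (((d : ℝ) - 1) / 2) ((1 - γ) / 2) ∧
    (2:ℝ) ^ (-γ) * (γ * ((d : ℝ) - 1) / ((d : ℝ) - γ)) *
          betaFn (((d : ℝ) - 1) / 2) ((1 - γ) / 2) < 0 := by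
  have hd2 : ((d - 2 : ℕ) : ℝ) = d - 2 := by
    rw [Nat.cast_sub (by omega), Nat.cast_two]
  have hd1 : (1 : ℝ) < d := by norm_cast; omega
  have hdγ : (d : ℝ) - γ ≠ 0 := by linarith
  set B := betaFn (((d : ℝ) - 1) / 2) ((1 - γ) / 2)
  have hB : 0 < B := betaFn_pos (by linarith) (by linarith)
  refine ⟨?_, mul_neg_of_neg_of_pos (mul_neg_of_pos_of_neg (by positivity)
    (div_neg_of_neg_of_pos (mul_neg_of_neg_of_pos hγ2 (by linarith)) (by linarith))) hB⟩
  have hB_shift : betaFn ((1 - γ) / 2) (((d : ℝ) - 2 + 1) / 2) = B := by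
    rw [betaFn_comm]; congr 1; ring
  have hB_succ : betaFn ((1 - γ) / 2) (((d : ℝ) + 1) / 2) = (d - 1) / (d - γ) * B := by
    rw [show ((d : ℝ) + 1) / 2 = (d - 2 + 1) / 2 + 1 by ring,
      betaFn_add_one_right (by linarith) (by linarith), hB_shift,
      show (1 - γ) / 2 + ((d : ℝ) - 2 + 1) / 2 = (d - γ) / 2 by ring]
    field_simp
    ring
  rw [← hd2]
  simp only [mul_div_assoc]
  rw [intervalIntegral.integral_sub
      ((intervalIntegrable_sin_pow_div_rpow hγ2.le d).const_mul _)
      ((intervalIntegrable_sin_pow_div_rpow hγ2.le (d - 2)).const_mul _),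
    intervalIntegral.integral_const_mul, intervalIntegral.integral_const_mul,
    integral_sin_pow_div_rpow (by linarith), integral_sin_pow_div_rpow (by linarith),
    hd2, hB_succ, hB_shift]
  field_simp
  ring

theorem stmt9 (d : ℕ) (hd : 3 ≤ d) (γ : ℝ) (hγ1 : -1 < γ) (hγ2 : γ < 0) :
    (∫ θ in (0:ℝ)..Real.pi,
        ((d : ℝ) * (Real.sin θ) ^ d / (2 * Real.sin (θ / 2)) ^ ((d : ℝ) + γ)
          - ((d : ℝ) - 1) * (Real.sin θ) ^ (d - 2) /
              (2 * Real.sin (θ / 2)) ^ ((d : ℝ) - 2 + γ)))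
      = (2:ℝ) ^ (-γ) * (γ * ((d : ℝ) - 1) / ((d : ℝ) - γ)) *
          betaFn (((d : ℝ) - 1) / 2) ((1 - γ) / 2) ∧
    (2:ℝ) ^ (-γ) * (γ * ((d : ℝ) - 1) / ((d : ℝ) - γ)) *
          betaFn (((d : ℝ) - 1) / 2) ((1 - γ) / 2) < 0 :=
  stmt9_general d hd γ hγ2
end
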